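/- arXiv:2205.14979 — 3 statements merged into one kernel-verified Lean document; each statement's English description precedes it below -/
import Mathlib

section
/- The 1-form ϖ = A0 ds0 + A1 ds1 + A2 ds2, where A_i = (1 + 36 s_i^3 - 216 (s_j + s_k) s_i^2 - 108 (s_j - s_k)^2 s_i)/(24 s_i) for {i, j, k} = {0, 1, 2}, is closed on (ℂ \ {0})^3, i.e. ∂A_i/∂s_j = ∂A_j/∂s_i for all i ≠ j. -/
/-! Up to terms free of `s_j`, the coefficient `A_i` is `-9 s_i s_j - (9/2) (s_j - s_k)^2`, so
`∂A_i/∂s_j = -9 (s_i + s_j - s_k)`, which is symmetric in `i` and `j`. -/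

/-- The coefficient `A_i` of `ϖ`, with `a = s_i` and `b, c` the two other coordinates. -/
def tauCoeff {𝕜 : Type*} [Field 𝕜] (a b c : 𝕜) : 𝕜 :=
  (1 + 36 * a ^ 3 - 216 * (b + c) * a ^ 2 - 108 * (b - c) ^ 2 * a) / (24 * a)

lemma tauCoeff_comm {𝕜 : Type*} [Field 𝕜] (a b c : 𝕜) : tauCoeff a b c = tauCoeff a c b := by
  unfold tauCoeff; ring

section

variable {𝕜 : Type*} [NontriviallyNormedField 𝕜] [CharZero 𝕜] {a : 𝕜}

lemma hasDerivAt_tauCoeff_left (ha : a ≠ 0) (b c : 𝕜) :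
    HasDerivAt (fun b => tauCoeff a b c) (-9 * (a + b - c)) b := by
  have hlin := (((hasDerivAt_id' b).add_const c).const_mul 216).mul_const (a ^ 2)
  have hsq := ((((hasDerivAt_id' b).sub_const c).pow 2).const_mul 108).mul_const a
  have hnum := ((hasDerivAt_const b (1 + 36 * a ^ 3)).sub hlin).sub hsq
  exact (hnum.div_const (24 * a)).congr_deriv (by field_simp; ring)

lemma deriv_tauCoeff_left (ha : a ≠ 0) (b c : 𝕜) :
    deriv (fun b => tauCoeff a b c) b = -9 * (a + b - c) :=
  (hasDerivAt_tauCoeff_left ha b c).deriv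

lemma deriv_tauCoeff_right (ha : a ≠ 0) (b c : 𝕜) :
    deriv (fun c => tauCoeff a b c) c = -9 * (a + c - b) := by
  simp only [tauCoeff_comm a b]
  exact deriv_tauCoeff_left ha c b

end

/-- The 1-form `ϖ = A0 ds0 + A1 ds1 + A2 ds2` is closed: mixed partials agree. -/
theorem stmt_7 (s0 s1 s2 : ℂ) (hs0 : s0 ≠ 0) (hs1 : s1 ≠ 0) (hs2 : s2 ≠ 0)
    (A0 A1 A2 : ℂ → ℂ → ℂ → ℂ)
    (hA0 : ∀ x y z : ℂ, A0 x y z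
      = (1 + 36 * x ^ 3 - 216 * (y + z) * x ^ 2 - 108 * (y - z) ^ 2 * x) / (24 * x))
    (hA1 : ∀ x y z : ℂ, A1 x y z
      = (1 + 36 * y ^ 3 - 216 * (x + z) * y ^ 2 - 108 * (x - z) ^ 2 * y) / (24 * y))
    (hA2 : ∀ x y z : ℂ, A2 x y z
      = (1 + 36 * z ^ 3 - 216 * (x + y) * z ^ 2 - 108 * (x - y) ^ 2 * z) / (24 * z)) :
    deriv (fun y => A0 s0 y s2) s1 = deriv (fun x => A1 x s1 s2) s0 ∧
    deriv (fun z => A0 s0 s1 z) s2 = deriv (fun x => A2 x s1 s2) s0 ∧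
    deriv (fun z => A1 s0 s1 z) s2 = deriv (fun y => A2 s0 y s2) s1 := by
  obtain rfl : A0 = fun x y z => tauCoeff x y z := funext₃ hA0
  obtain rfl : A1 = fun x y z => tauCoeff y x z := funext₃ hA1
  obtain rfl : A2 = fun x y z => tauCoeff z x y := funext₃ hA2
  simp only [deriv_tauCoeff_left, deriv_tauCoeff_right, hs0, hs1, hs2, ne_eq,
    not_false_eq_true]
  refine ⟨?_, ?_, ?_⟩ <;> ring
end

section
/- With s_i and σ_j as above (t_i^2 = s_i^3, σ1 = -(s0 - s1 - 3 s2)/(2 s2), σ2 = (-3 s0 - s1 + s2)/(2 s2), σ3 = -s0/s2), the following hold: ∂σ1/∂t0 = σ3/(3 t0) and ∂σ2/∂t0 = σ3/t0. -/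
open Filter

/-- Differentiating `f ^ m = id ^ n` gives `m f^(m-1) f' = n x^(n-1)`; multiplying by `f x * x` and
substituting `f x ^ m = x ^ n` leaves `m x^n x f' = n x^n f x`. -/
theorem hasDerivAt_of_eventually_pow_eq_pow {𝕜 : Type*} [NontriviallyNormedField 𝕜]
    {f : 𝕜 → 𝕜} {x : 𝕜} {m n : ℕ} (hm : (m : 𝕜) ≠ 0) (hx : x ≠ 0)
    (hf : DifferentiableAt 𝕜 f x) (h : ∀ᶠ y in nhds x, f y ^ m = y ^ n) :
    HasDerivAt f (n * f x / (m * x)) x := by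
  have hpow : m * f x ^ (m - 1) * deriv f x = n * x ^ (n - 1) :=
    (hf.hasDerivAt.pow m).unique ((hasDerivAt_pow n x).congr_of_eventuallyEq h)
  have hm' : m ≠ 0 := by rintro rfl; simp at hm
  have hnx : n * x ^ (n - 1) * x = n * x ^ n := by
    rcases eq_or_ne n 0 with rfl | hn
    · simp
    · rw [mul_assoc, pow_sub_one_mul hn]
  have hkey : x ^ n * (m * x * deriv f x) = x ^ n * (n * f x) := by
    calc x ^ n * (m * x * deriv f x) = m * f x ^ m * deriv f x * x := by rw [h.self_of_nhds]; ring
      _ = (m * f x ^ (m - 1) * deriv f x) * f x * x := by rw [← pow_sub_one_mul hm' (f x)]; ring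
      _ = x ^ n * (n * f x) := by rw [hpow, mul_right_comm, hnx]; ring
  have hderiv : deriv f x = n * f x / (m * x) := by
    rw [eq_div_iff (mul_ne_zero hm hx), mul_comm]
    exact mul_left_cancel₀ (pow_ne_zero n hx) hkey
  exact hderiv ▸ hf.hasDerivAt

theorem stmt_9_general (t0 t1 t2 : ℂ) (ht0 : t0 ≠ 0)
    (s0 s1 s2 : ℂ → ℂ)
    (hs0d : DifferentiableAt ℂ s0 t0)
    (hs0 : ∀ᶠ t in nhds t0, (s0 t) ^ 3 = t ^ 2)
    (σ1 σ2 σ3 : ℂ → ℂ)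
    (hσ1 : ∀ t, σ1 t = -(s0 t - s1 t1 - 3 * s2 t2) / (2 * s2 t2))
    (hσ2 : ∀ t, σ2 t = (-3 * s0 t - s1 t1 + s2 t2) / (2 * s2 t2))
    (hσ3 : ∀ t, σ3 t = -(s0 t) / s2 t2) :
    deriv σ1 t0 = σ3 t0 / (3 * t0) ∧ deriv σ2 t0 = σ3 t0 / t0 := by
  have hs0' := hasDerivAt_of_eventually_pow_eq_pow (by norm_num) ht0 hs0d hs0
  push_cast at hs0'
  obtain rfl := funext hσ1
  obtain rfl := funext hσ2
  obtain rfl := funext hσ3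
  constructor
  · have hσ1' : HasDerivAt (fun t => -(s0 t - s1 t1 - 3 * s2 t2) / (2 * s2 t2)) _ t0 :=
      ((hs0'.sub_const _).sub_const _).neg.div_const _
    rw [hσ1'.deriv]
    ring
  · have hσ2' : HasDerivAt (fun t => (-3 * s0 t - s1 t1 + s2 t2) / (2 * s2 t2)) _ t0 :=
      (((hs0'.const_mul (-3)).sub_const _).add_const _).div_const _
    rw [hσ2'.deriv]
    ring

/-- Reduced Garnier equations: `∂σ1/∂t0 = σ3/(3 t0)` and `∂σ2/∂t0 = σ3/t0`. -/
theorem stmt_9 (t0 t1 t2 : ℂ) (ht0 : t0 ≠ 0) (ht1 : t1 ≠ 0) (ht2 : t2 ≠ 0)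
    (s0 s1 s2 : ℂ → ℂ)
    (hs0d : DifferentiableAt ℂ s0 t0) (hs1d : DifferentiableAt ℂ s1 t1)
    (hs2d : DifferentiableAt ℂ s2 t2)
    (hs0 : ∀ᶠ t in nhds t0, (s0 t) ^ 3 = t ^ 2)
    (hs1 : ∀ᶠ t in nhds t1, (s1 t) ^ 3 = t ^ 2)
    (hs2 : ∀ᶠ t in nhds t2, (s2 t) ^ 3 = t ^ 2)
    (hn0 : s0 t0 ≠ 0) (hn1 : s1 t1 ≠ 0) (hn2 : s2 t2 ≠ 0)
    (σ1 σ2 σ3 : ℂ → ℂ)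
    (hσ1 : ∀ t, σ1 t = -(s0 t - s1 t1 - 3 * s2 t2) / (2 * s2 t2))
    (hσ2 : ∀ t, σ2 t = (-3 * s0 t - s1 t1 + s2 t2) / (2 * s2 t2))
    (hσ3 : ∀ t, σ3 t = -(s0 t) / s2 t2) :
    deriv σ1 t0 = σ3 t0 / (3 * t0) ∧ deriv σ2 t0 = σ3 t0 / t0 :=
  stmt_9_general t0 t1 t2 ht0 s0 s1 s2 hs0d hs0 σ1 σ2 σ3 hσ1 hσ2 hσ3
end

section
/- Consider the nonautonomous system of ODE-flows on ℂ^3 given by the vector fields X0: (σ1, σ2, σ3) ↦ (σ3/(3 t0), σ3/t0, 2 σ3/(3 t0)), X1: (σ1, σ2, σ3) ↦ ((σ3 - σ2 + σ1 - 1)/(3 t1), -(σ3 - σ2 + σ1 - 1)/(3 t1), 0), and X2: (σ1, σ2, σ3) ↦ (-(2 σ1 - 3)/(3 t2), -(2 σ2 - 1)/(3 t2), -2 σ3/(3 t2)). Then this Pfaffian system is completely integrable: for all i ≠ j the equality ∂_{t_j}(X_i) + (X_j · ∇)(X_i) = ∂_{t_i}(X_j) + (X_i · ∇)(X_j) holds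 identically in (σ1, σ2, σ3, t0, t1, t2) with t0, t1, t2 nonzero. -/
/-!
Each `X i` depends on the times only through `t i` and is affine in `σ`. Hence the
`∂_t` terms vanish for `i ≠ j`, and `(X_j · ∇) X_i` is the difference quotient
`X_i(σ + X_j σ) - X_i σ`, which turns the integrability condition into an identity
between rational functions checked pair by pair.
-/

open Function

section
variable {𝕜 E F : Type*} [NontriviallyNormedField 𝕜] [NormedAddCommGroup E] [NormedSpace 𝕜 E]
  [NormedAddCommGroup F] [NormedSpace 𝕜 F]

theorem fderiv_apply_eq_sub_of_map_add_smul {f : E → F} {x v : E} (hf : DifferentiableAt 𝕜 f x)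
    (hline : ∀ s : 𝕜, f (x + s • v) = f x + s • (f (x + v) - f x)) :
    fderiv 𝕜 f x v = f (x + v) - f x := by
  have hcurve : HasDerivAt (fun s : 𝕜 => x + s • v) v 0 := by
    simpa using ((hasDerivAt_id (0 : 𝕜)).smul_const v).const_add x
  have hf' : HasFDerivAt f (fderiv 𝕜 f x) (x + (0 : 𝕜) • v) := by
    simpa using hf.hasFDerivAt
  have hcomp := hf'.comp_hasDerivAt (0 : 𝕜) hcurve
  have haffine : HasDerivAt (fun s : 𝕜 => f x + s • (f (x + v) - f x)) (f (x + v) - f x) 0 := by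
    simpa using ((hasDerivAt_id (0 : 𝕜)).smul_const (f (x + v) - f x)).const_add (f x)
  simp only [comp_def, hline] at hcomp
  exact hcomp.unique haffine

end

noncomputable def reducedField : Fin 3 → (Fin 3 → ℂ) → ℂ × ℂ × ℂ → ℂ × ℂ × ℂ
  | 0 => fun t σ => (σ.2.2 / (3 * t 0), σ.2.2 / t 0, 2 * σ.2.2 / (3 * t 0))
  | 1 => fun t σ => ((σ.2.2 - σ.2.1 + σ.1 - 1) / (3 * t 1),
      -(σ.2.2 - σ.2.1 + σ.1 - 1) / (3 * t 1), 0)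
  | 2 => fun t σ => (-(2 * σ.1 - 3) / (3 * t 2), -(2 * σ.2.1 - 1) / (3 * t 2),
      -(2 * σ.2.2) / (3 * t 2))

theorem reducedField_update_of_ne {i j : Fin 3} (h : i ≠ j) (t : Fin 3 → ℂ) (u : ℂ) :
    reducedField i (update t j u) = reducedField i t := by
  fin_cases i <;> simp at h <;> simp [reducedField, update_of_ne h]

theorem differentiable_reducedField (i : Fin 3) (t : Fin 3 → ℂ) :
    Differentiable ℂ (reducedField i t) := by
  fin_cases i <;> dsimp [reducedField] <;> fun_prop

theorem reducedField_add_smul (i : Fin 3) (t : Fin 3 → ℂ) (σ v : ℂ × ℂ × ℂ) (s : ℂ) :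
    reducedField i t (σ + s • v) =
      reducedField i t σ + s • (reducedField i t (σ + v) - reducedField i t σ) := by
  fin_cases i <;> ext <;> simp [reducedField] <;> ring

theorem reducedField_sub_comm (i j : Fin 3) (t : Fin 3 → ℂ) (σ : ℂ × ℂ × ℂ) :
    reducedField i t (σ + reducedField j t σ) - reducedField i t σ =
      reducedField j t (σ + reducedField i t σ) - reducedField j t σ := by
  fin_cases i <;> fin_cases j <;> ext <;> simp [reducedField] <;> ring

theorem fderiv_reducedField_apply (i : Fin 3) (t : Fin 3 → ℂ) (σ v : ℂ × ℂ × ℂ) :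
    fderiv ℂ (reducedField i t) σ v = reducedField i t (σ + v) - reducedField i t σ :=
  fderiv_apply_eq_sub_of_map_add_smul (differentiable_reducedField i t σ)
    (reducedField_add_smul i t σ v)

/-- Frobenius integrability of the reduced Pfaffian system: for `i ≠ j`,
`∂_{t_j}(X_i) + (X_j·∇)(X_i) = ∂_{t_i}(X_j) + (X_i·∇)(X_j)`. -/
theorem stmt_12 (X : Fin 3 → (Fin 3 → ℂ) → (ℂ × ℂ × ℂ) → (ℂ × ℂ × ℂ))
    (hX0 : ∀ (t : Fin 3 → ℂ) (σ : ℂ × ℂ × ℂ),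
      X 0 t σ = (σ.2.2 / (3 * t 0), σ.2.2 / t 0, 2 * σ.2.2 / (3 * t 0)))
    (hX1 : ∀ (t : Fin 3 → ℂ) (σ : ℂ × ℂ × ℂ),
      X 1 t σ = ((σ.2.2 - σ.2.1 + σ.1 - 1) / (3 * t 1),
        -(σ.2.2 - σ.2.1 + σ.1 - 1) / (3 * t 1), 0))
    (hX2 : ∀ (t : Fin 3 → ℂ) (σ : ℂ × ℂ × ℂ),
      X 2 t σ = (-(2 * σ.1 - 3) / (3 * t 2), -(2 * σ.2.1 - 1) / (3 * t 2),
        -(2 * σ.2.2) / (3 * t 2))) :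
    ∀ (t : Fin 3 → ℂ), (∀ k, t k ≠ 0) → ∀ (σ : ℂ × ℂ × ℂ) (i j : Fin 3), i ≠ j →
      deriv (fun u => X i (Function.update t j u) σ) (t j)
        + fderiv ℂ (X i t) σ (X j t σ)
      = deriv (fun u => X j (Function.update t i u) σ) (t i)
        + fderiv ℂ (X j t) σ (X i t σ) := by
  intro t _ σ i j hij
  obtain rfl : X = reducedField := by
    funext i t σ
    fin_cases i
    exacts [hX0 t σ, hX1 t σ, hX2 t σ]
  simp only [reducedField_update_of_ne hij, reducedField_update_of_ne hij.symm, deriv_const,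
    fderiv_reducedField_apply, zero_add, reducedField_sub_comm i j]
end
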